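/- Let i ∈ R(u,v) be a reduced word and {i,j} an edge of Π. Then no two inclined edges of the (i,j)-strip of Σ(i) cross each other inside the strip; precisely, there do not exist inclined edges {k,l} and {k',l'} of Σ_{i,j}(i), with k < l and k' < l', such that k < k' < l < l' and the vertices A_k and A_{k'} lie on opposite levels (y(A_k) = −y(A_{k'})). In particular, the planar realization of the (i,j)-strip is a planar graph. -/

import Mathlib

open scoped Classical

namespace SLC

variable {V : Type*} [DecidableEq V]

/-- The simply-laced Coxeter matrix associated with a simple graph `P`:
`M i i = 1`, `M i j = 3` if `i` and `j` are adjacent, and `M i j = 2` otherwise. -/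
noncomputable def coxeterMatrix (P : SimpleGraph V) : CoxeterMatrix V where
  M := fun i j => if i = j then 1 else if P.Adj i j then 3 else 2
  isSymm := by
    ext i j
    change (if j = i then (1 : ℕ) else if P.Adj j i then 3 else 2) =
      (if i = j then 1 else if P.Adj i j then 3 else 2)
    by_cases h : i = j
    · subst h; rfl
    · rw [if_neg (Ne.symm h), if_neg h]
      by_cases ha : P.Adj i j
      · rw [if_pos (P.adj_symm ha), if_pos ha]
      · rw [if_neg (fun hc => ha (P.adj_symm hc)), if_neg ha]
  diagonal := by intro i; simp
  off_diagonal := by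
    intro i i' h
    try dsimp only
    rw [if_neg h]
    split <;> omega

/-- `e` is a reduced word for the pair `(u, v)`: the subword of entries with negative sign
(first component `false`), with signs forgotten, is a reduced word for `u`, and the subword of
entries with positive sign is a reduced word for `v`. -/
def IsRWordPair {W : Type*} [Group W] (P : SimpleGraph V)
    (cs : CoxeterSystem (coxeterMatrix P) W) (u v : W) {m : ℕ}
    (e : Fin m → Bool × V) : Prop :=
  cs.wordProd (((List.ofFn e).filter fun p => !p.1).map Prod.snd) = u ∧
    (((List.ofFn e).filter fun p => !p.1).map Prod.snd).length = cs.length u ∧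
    cs.wordProd (((List.ofFn e).filter fun p => p.1).map Prod.snd) = v ∧
    (((List.ofFn e).filter fun p => p.1).map Prod.snd).length = cs.length v

/-- `k = l⁻`: `k` is the largest index smaller than `l` carrying the same letter of `P`. -/
def IsPred {m : ℕ} (e : Fin m → Bool × V) (k l : Fin m) : Prop :=
  k < l ∧ (e k).2 = (e l).2 ∧ ∀ j, k < j → j < l → (e j).2 ≠ (e l).2

/-- The index `l` is `e`-bounded: `l⁻ > 0`, i.e. `l` has a predecessor. -/
def BoundedIdx {m : ℕ} (e : Fin m → Bool × V) (l : Fin m) : Prop :=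
  ∃ k, IsPred e k l

/-- Conditions (ii) and (iii) of Definition 3.1 (inclined edges), for `k < l`. -/
def InclCond {m : ℕ} (P : SimpleGraph V) (e : Fin m → Bool × V) (k l : Fin m) : Prop :=
  k < l ∧ P.Adj (e k).2 (e l).2 ∧
    ((∃ p, IsPred e p l ∧ p < k ∧ (∀ q, IsPred e q k → q < p) ∧ (e p).1 = (e k).1) ∨
     (∃ q, IsPred e q k ∧ (∀ p, IsPred e p l → p < q) ∧ (e q).1 = !(e k).1))

/-- `a → b` is a directed edge of the graph `Σ(e)`. -/
def DirEdge {m : ℕ} (P : SimpleGraph V) (e : Fin m → Bool × V) (a b : Fin m) : Prop :=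
  (IsPred e a b ∧ (e a).1 = true) ∨ (IsPred e b a ∧ (e b).1 = false) ∨
    (InclCond P e a b ∧ (e a).1 = false) ∨ (InclCond P e b a ∧ (e b).1 = true)

/-- `{a, b}` is an edge of the graph `Σ(e)` (in some direction). -/
def UEdge {m : ℕ} (P : SimpleGraph V) (e : Fin m → Bool × V) (a b : Fin m) : Prop :=
  DirEdge P e a b ∨ DirEdge P e b a

/-- Adjacency in the doubled graph `P̃`. -/
def TAdj (P : SimpleGraph V) (p q : Bool × V) : Prop :=
  p.1 = q.1 ∧ P.Adj p.2 q.2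

/-- The negative of a letter of `P̃`. -/
def negEnt (p : Bool × V) : Bool × V := (!p.1, p.2)

/-- The combinatorial data of a 2- or 3-move: the (consecutive) positions involved. -/
inductive MoveSpec (m : ℕ) where
  | two (a b : Fin m)
  | three (a b c : Fin m)

/-- The position of a move (the last of the positions involved). -/
def MoveSpec.pos {m : ℕ} : MoveSpec m → Fin m
  | .two _ b => b
  | .three _ _ c => c

/-- `e'` is obtained from `e` by the 2- or 3-move described by `s`. -/
def IsMove {m : ℕ} (P : SimpleGraph V) (e e' : Fin m → Bool × V) : MoveSpec m → Prop
  | .two a b => (b : ℕ) = (a : ℕ) + 1 ∧ ¬ TAdj P (e a) (e b) ∧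
      e' a = e b ∧ e' b = e a ∧ ∀ l, l ≠ a → l ≠ b → e' l = e l
  | .three a b c => (b : ℕ) = (a : ℕ) + 1 ∧ (c : ℕ) = (b : ℕ) + 1 ∧
      e c = e a ∧ TAdj P (e b) (e c) ∧
      e' a = e b ∧ e' b = e a ∧ e' c = e b ∧ ∀ l, l ≠ a → l ≠ b → l ≠ c → e' l = e l

/-- A move is trivial if it is a 2-move interchanging entries which are not opposite. -/
def MoveTrivial {m : ℕ} (e : Fin m → Bool × V) : MoveSpec m → Prop
  | .two a b => e b ≠ negEnt (e a)
  | .three _ _ _ => False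

/-- The permutation `σ` associated with a move. -/
noncomputable def moveSigma {m : ℕ} (e : Fin m → Bool × V) : MoveSpec m → Equiv.Perm (Fin m)
  | .two a b => if e b = negEnt (e a) then 1 else Equiv.swap a b
  | .three a b _ => Equiv.swap a b

/-- The skew-symmetric form `Ω` of the graph `Σ(e)`, over a commutative ring `R`. -/
noncomputable def omegaForm (R : Type*) [CommRing R] {m : ℕ} (P : SimpleGraph V)
    (e : Fin m → Bool × V) (x y : Fin m → R) : R :=
  ∑ a : Fin m, ∑ b : Fin m, if DirEdge P e a b then x a * y b - x b * y a else 0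

/-- The symplectic transvection `τ_k` of the graph `Σ(e)`, over `R`. -/
noncomputable def transv (R : Type*) [CommRing R] {m : ℕ} (P : SimpleGraph V)
    (e : Fin m → Bool × V) (k : Fin m) (x : Fin m → R) : Fin m → R :=
  x - omegaForm R P e x (Pi.single k 1) • (Pi.single k 1 : Fin m → R)

/-- The group `Γ_e ⊆ GL_m(ℤ)` generated by the transvections `τ_k`, `k ∈ B(e)`. -/
noncomputable def Gamma {m : ℕ} (P : SimpleGraph V) (e : Fin m → Bool × V) :
    Subgroup ((Fin m → ℤ) ≃ₗ[ℤ] (Fin m → ℤ)) :=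
  Subgroup.closure {g | ∃ k, BoundedIdx e k ∧ ⇑g = transv ℤ P e k}

/-- The group `Γ_e(F₂)` of linear transformations of `F₂^m` generated by the reductions
modulo 2 of the transvections `τ_k`, `k ∈ B(e)`. -/
noncomputable def GammaF2 {m : ℕ} (P : SimpleGraph V) (e : Fin m → Bool × V) :
    Subgroup (Equiv.Perm (Fin m → ZMod 2)) :=
  Subgroup.closure {g | ∃ k, BoundedIdx e k ∧ ⇑g = transv (ZMod 2) P e k}

/-- The map `φ⁺` associated with a move. -/
noncomputable def phiP {m : ℕ} (P : SimpleGraph V) (e : Fin m → Bool × V) (s : MoveSpec m)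
    (x : Fin m → ℤ) : Fin m → ℤ := fun l =>
  if l = s.pos ∧ ¬ MoveTrivial e s then
    (∑ a : Fin m, if DirEdge P e a s.pos then x a else 0) - x s.pos
  else x (moveSigma e s l)

/-- The map `φ⁻` associated with a move. -/
noncomputable def phiM {m : ℕ} (P : SimpleGraph V) (e : Fin m → Bool × V) (s : MoveSpec m)
    (x : Fin m → ℤ) : Fin m → ℤ := fun l =>
  if l = s.pos ∧ ¬ MoveTrivial e s then
    (∑ b : Fin m, if DirEdge P e s.pos b then x b else 0) - x s.pos
  else x (moveSigma e s l)

/-! Both kinds of inclined edge `{k, l}` satisfy `l⁻ < k`, so the letter of `l` does not occur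
strictly between `k` and `l`. An inclined edge of the strip starting at `k'` with `k < k' < l`
on the level opposite to `k`, i.e. on the level of `l`, would be such an occurrence. -/

section

variable {V : Type*} {m : ℕ} {e : Fin m → Bool × V}

theorem IsPred.unique {p q l : Fin m} (hp : IsPred e p l) (hq : IsPred e q l) : p = q := by
  rcases lt_trichotomy p q with hpq | hpq | hpq
  · exact absurd hq.2.1 (hp.2.2 q hpq hq.1)
  · exact hpq
  · exact absurd hp.2.1 (hq.2.2 p hpq hp.1)

theorem exists_isPred_ge {x l : Fin m} (hxl : x < l) (hx : (e x).2 = (e l).2) :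
    ∃ p, IsPred e p l ∧ x ≤ p := by
  set S := Finset.univ.filter fun y => y < l ∧ (e y).2 = (e l).2
  have mem_S {y : Fin m} : y ∈ S ↔ y < l ∧ (e y).2 = (e l).2 := by simp [S]
  obtain ⟨p, hpS, hmax⟩ := S.exists_max_image id ⟨x, mem_S.2 ⟨hxl, hx⟩⟩
  refine ⟨p, ⟨(mem_S.1 hpS).1, (mem_S.1 hpS).2, fun y hpy hyl hy => ?_⟩, hmax x (mem_S.2 ⟨hxl, hx⟩)⟩
  exact hpy.not_ge (hmax y (mem_S.2 ⟨hyl, hy⟩))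

theorem InclCond.isPred_lt {P : SimpleGraph V} {k l p : Fin m} (h : InclCond P e k l)
    (hp : IsPred e p l) : p < k := by
  rcases h.2.2 with ⟨p', hp', hp'k, -, -⟩ | ⟨q, hq, hql, -⟩
  · exact hp.unique hp' ▸ hp'k
  · exact (hql p hp).trans hq.1

theorem InclCond.snd_ne_of_lt_of_lt {P : SimpleGraph V} {k l x : Fin m} (h : InclCond P e k l)
    (hkx : k < x) (hxl : x < l) : (e x).2 ≠ (e l).2 := fun hx => by
  obtain ⟨p, hp, hxp⟩ := exists_isPred_ge hxl hx
  exact (hkx.trans_le hxp).not_gt (h.isPred_lt hp)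

end

variable {V : Type*} [DecidableEq V] [Fintype V] {W : Type*} [Group W]

theorem strip_planar_general (P : SimpleGraph V) {m : ℕ} (e : Fin m → Bool × V) (i j : V) :
    ¬ ∃ k l k' l' : Fin m,
        ((e k).2 = i ∨ (e k).2 = j) ∧ ((e l).2 = i ∨ (e l).2 = j) ∧
        ((e k').2 = i ∨ (e k').2 = j) ∧ ((e l').2 = i ∨ (e l').2 = j) ∧
        InclCond P e k l ∧ InclCond P e k' l' ∧
        k < k' ∧ k' < l ∧ l < l' ∧ (e k).2 ≠ (e k').2 := by
  rintro ⟨k, l, k', l', hk, hl, hk', -, hkl, -, hkk', hk'l, -, hne⟩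
  -- `k` and `l` are adjacent in `P`, so in the strip `k'` lies on the level of `l`
  have hk'_level : (e k').2 = (e l).2 := by
    have := hkl.2.1.ne
    grind
  exact hkl.snd_ne_of_lt_of_lt hkk' hk'l hk'_level

/-- Theorem 3.3 (a): no two inclined edges of the `(i,j)`-strip of `Σ(i)` cross each other
inside the strip. -/
theorem strip_planar (P : SimpleGraph V) (cs : CoxeterSystem (coxeterMatrix P) W)
    (u v : W) {m : ℕ} (hm : m = cs.length u + cs.length v)
    (e : Fin m → Bool × V) (he : IsRWordPair P cs u v e)
    (i j : V) (hij : P.Adj i j) :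
    ¬ ∃ k l k' l' : Fin m,
        ((e k).2 = i ∨ (e k).2 = j) ∧ ((e l).2 = i ∨ (e l).2 = j) ∧
        ((e k').2 = i ∨ (e k').2 = j) ∧ ((e l').2 = i ∨ (e l').2 = j) ∧
        InclCond P e k l ∧ InclCond P e k' l' ∧
        k < k' ∧ k' < l ∧ l < l' ∧ (e k).2 ≠ (e k').2 :=
  strip_planar_general P e i j

end SLC
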